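/- arXiv:1703.04147 — 5 statements merged into one kernel-verified Lean document; each statement's English description precedes it below -/
import Mathlib

section
/- The quadratic Gaudin Hamiltonians commute: for pairwise distinct complex numbers z_1,...,z_n, the elements H_i = Σ_{j≠i} e_{ij}e_{ji}/(z_i - z_j) of the universal enveloping algebra U(gl_n) (where e_{ij} are the standard matrix unit generators) satisfy [H_i, H_k] = 0 for all i, k. -/
open scoped BigOperators

attribute [local instance] LieRing.ofAssociativeRing

/-- The Lie algebra `gl_n` of `n × n` complex matrices. -/
abbrev gl (n : ℕ) := Matrix (Fin n) (Fin n) ℂ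

/-- The matrix unit generator `e_{ij}` viewed inside `U(gl_n)`. -/
noncomputable def E (n : ℕ) (i j : Fin n) : UniversalEnvelopingAlgebra ℂ (gl n) :=
  UniversalEnvelopingAlgebra.ι ℂ (Matrix.single i j 1)

/-- The quadratic Gaudin Hamiltonian `H_i = Σ_{j ≠ i} e_{ij} e_{ji} / (z_i - z_j)` in `U(gl_n)`. -/
noncomputable def gaudinH (n : ℕ) (z : Fin n → ℂ) (i : Fin n) :
    UniversalEnvelopingAlgebra ℂ (gl n) :=
  ∑ j ∈ Finset.univ.erase i, (z i - z j)⁻¹ • (E n i j * E n j i)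

/-!
Write `X_ab = e_ab e_ba`, so that `[H_i, H_k]` is the sum of
`(z_i - z_j)⁻¹ (z_k - z_l)⁻¹ [X_ij, X_kl]` over `j ≠ i`, `l ≠ k`. The commutation relations
`[e_ab, e_cd] = δ_bc e_ad - δ_da e_cb` kill the terms with `{i, j} ∩ {k, l} = ∅` as well as
`[X_ik, X_ki]`. The surviving terms group by the third index `m ∉ {i, k}`: the brackets
`[X_ik, X_km]`, `[X_im, X_ki]`, `[X_im, X_km]` equal `T`, `T`, `-T` for one cubic element `T`,
and their coefficients cancel by the partial fraction identity
`1 / ((a - b)(b - c)) = 1 / (a - c) · (1 / (a - b) + 1 / (b - c))`.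
Only these commutation relations are used, so the argument applies to any family of elements of
an algebra satisfying them.
-/

open Finset

namespace Ring

variable {A : Type*} [Ring A]

theorem lie_mul (x a b : A) : ⁅x, a * b⁆ = ⁅x, a⁆ * b + a * ⁅x, b⁆ := by
  simp only [lie_def]; noncomm_ring

theorem mul_lie (a b x : A) : ⁅a * b, x⁆ = a * ⁅b, x⁆ + ⁅a, x⁆ * b := by
  simp only [lie_def]; noncomm_ring

end Ring

theorem smul_lie_smul {R A : Type*} [CommRing R] [Ring A] [Algebra R A] (c d : R) (x y : A) :
    ⁅c • x, d • y⁆ = (c * d) • ⁅x, y⁆ := by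
  rw [smul_lie, lie_smul d x y, smul_smul]

section GlRelations

variable {ι : Type*} [DecidableEq ι]

def IsGlFamily {L : Type*} [LieRing L] (e : ι → ι → L) : Prop :=
  ∀ a b c d, ⁅e a b, e c d⁆ = (if b = c then e a d else 0) - (if d = a then e c b else 0)

theorem isGlFamily_single [Fintype ι] (R : Type*) [Ring R] :
    IsGlFamily fun a b : ι => (Matrix.single a b 1 : Matrix ι ι R) := by
  intro a b c d
  rw [Ring.lie_def]
  by_cases hbc : b = c <;> by_cases hda : d = a <;>
    simp [hbc, hda, Matrix.single_mul_single_of_ne]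

theorem IsGlFamily.map {R L L' : Type*} [CommRing R] [LieRing L] [LieAlgebra R L]
    [LieRing L'] [LieAlgebra R L'] {e : ι → ι → L} (he : IsGlFamily e) (f : L →ₗ⁅R⁆ L') :
    IsGlFamily fun a b => f (e a b) := by
  intro a b c d
  rw [← LieHom.map_lie, he, map_sub, apply_ite f, apply_ite f, map_zero]

end GlRelations

theorem isGlFamily_E (n : ℕ) : IsGlFamily (E n) :=
  (isGlFamily_single ℂ).map (UniversalEnvelopingAlgebra.ι ℂ)

namespace IsGlFamily

variable {ι A : Type*} [DecidableEq ι] [Ring A] {e : ι → ι → A}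

theorem lie_pair_pair (he : IsGlFamily e) (a b c d : ι) :
    ⁅e a b * e b a, e c d * e d c⁆ =
      (e a b * ((if a = c then e b d else 0) - (if d = b then e c a else 0))
        + ((if b = c then e a d else 0) - (if d = a then e c b else 0)) * e b a) * e d c
      + e c d * (e a b * ((if a = d then e b c else 0) - (if c = b then e d a else 0))
        + ((if b = d then e a c else 0) - (if c = a then e d b else 0)) * e b a) := by
  rw [Ring.lie_mul, Ring.mul_lie, Ring.mul_lie, he, he, he, he]

theorem commute_pair_of_disjoint (he : IsGlFamily e) {a b c d : ι} (hac : a ≠ c) (had : a ≠ d)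
    (hbc : b ≠ c) (hbd : b ≠ d) : Commute (e a b * e b a) (e c d * e d c) := by
  rw [commute_iff_lie_eq, he.lie_pair_pair]
  simp [hac, had, hbc, hbd, hac.symm, had.symm, hbc.symm, hbd.symm]

theorem commute_pair_diag (he : IsGlFamily e) (a b c : ι) : Commute (e a b * e b a) (e c c) := by
  rw [commute_iff_lie_eq, Ring.mul_lie, he, he]
  split_ifs <;> subst_vars <;> first | contradiction | noncomm_ring

theorem commute_pair_swap (he : IsGlFamily e) (a b : ι) :
    Commute (e a b * e b a) (e b a * e a b) := by
  have hswap : e b a * e a b = e a b * e b a + (e b b - e a a) := by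
    have h := he b a a b
    rw [Ring.lie_def, if_pos rfl, if_pos rfl] at h
    exact sub_eq_iff_eq_add'.mp h
  rw [hswap]
  exact (Commute.refl _).add_right
    ((he.commute_pair_diag a b b).sub_right (he.commute_pair_diag a b a))

theorem lie_pair_pair_of_adjacent (he : IsGlFamily e) {a b c : ι} (hab : a ≠ b) (hac : a ≠ c)
    (hbc : b ≠ c) :
    ⁅e a b * e b a, e b c * e c b⁆ = e a c * e b a * e c b - e b c * e a b * e c a := by
  rw [he.lie_pair_pair]
  simp only [if_neg hab, if_neg hac, if_neg hbc, if_neg hab.symm,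
    if_neg hac.symm, if_neg hbc.symm]
  noncomm_ring

theorem lie_pair_pair_of_same_target (he : IsGlFamily e) {a b c : ι} (hab : a ≠ b) (hac : a ≠ c)
    (hbc : b ≠ c) :
    ⁅e a c * e c a, e b c * e c b⁆ = e b c * e a b * e c a - e a c * e b a * e c b := by
  rw [he.lie_pair_pair]
  simp only [if_neg hab, if_neg hac, if_neg hbc, if_neg hab.symm,
    if_neg hac.symm, if_neg hbc.symm]
  noncomm_ring
  abel

end IsGlFamily

theorem inv_sub_mul_inv_sub {K : Type*} [Field K] {a b c : K} (hab : a ≠ b) (hac : a ≠ c)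
    (hbc : b ≠ c) : (a - b)⁻¹ * (b - c)⁻¹ = (a - c)⁻¹ * ((a - b)⁻¹ + (b - c)⁻¹) := by
  have := sub_ne_zero.mpr hab
  have := sub_ne_zero.mpr hac
  have := sub_ne_zero.mpr hbc
  field_simp
  ring

theorem sum_erase_sum_erase_eq_zero {ι M : Type*} [Fintype ι] [DecidableEq ι] [AddCommMonoid M]
    {i k : ι} (hik : i ≠ k) (F : ι → ι → M) (hki : F k i = 0)
    (hoff : ∀ j l, j ≠ i → j ≠ k → l ≠ i → l ≠ k → j ≠ l → F j l = 0)
    (hgroup : ∀ m, m ≠ i → m ≠ k → F k m + F m i + F m m = 0) :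
    ∑ j ∈ univ.erase i, ∑ l ∈ univ.erase k, F j l = 0 := by
  have hk : k ∈ univ.erase i := mem_erase.mpr ⟨hik.symm, mem_univ k⟩
  have hi : i ∈ univ.erase k := mem_erase.mpr ⟨hik, mem_univ i⟩
  have hrow : ∀ j ∈ (univ.erase i).erase k, ∑ l ∈ univ.erase k, F j l = F j i + F j j := by
    intro j hj
    obtain ⟨hjk, hji⟩ : j ≠ k ∧ j ≠ i := by simpa using hj
    rw [← add_sum_erase _ _ hi]
    congr 1
    refine sum_eq_single_of_mem j (by simp [hji, hjk]) fun l hl hlj => ?_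
    obtain ⟨hli, hlk⟩ : l ≠ i ∧ l ≠ k := by simpa using hl
    exact hoff j l hji hjk hli hlk (Ne.symm hlj)
  rw [← add_sum_erase _ _ hk, ← add_sum_erase _ _ hi, hki, zero_add, sum_congr rfl hrow,
    erase_right_comm, ← sum_add_distrib]
  refine sum_eq_zero fun m hm => ?_
  obtain ⟨hmk, hmi⟩ : m ≠ k ∧ m ≠ i := by simpa using hm
  rw [← add_assoc]
  exact hgroup m hmi hmk

section Gaudin

variable {ι K A : Type*} [DecidableEq ι] [Field K] [Ring A] [Algebra K A] {e : ι → ι → A}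

theorem IsGlFamily.lie_three_term_eq_zero (he : IsGlFamily e) {z : ι → K} {i k m : ι}
    (hik : z i ≠ z k) (him : z i ≠ z m) (hkm : z k ≠ z m) :
    ⁅(z i - z k)⁻¹ • (e i k * e k i), (z k - z m)⁻¹ • (e k m * e m k)⁆
      + ⁅(z i - z m)⁻¹ • (e i m * e m i), (z k - z i)⁻¹ • (e k i * e i k)⁆
      + ⁅(z i - z m)⁻¹ • (e i m * e m i), (z k - z m)⁻¹ • (e k m * e m k)⁆ = 0 := by
  have hik' := ne_of_apply_ne z hik
  have him' := ne_of_apply_ne z him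
  have hkm' := ne_of_apply_ne z hkm
  set T := e i m * e k i * e m k - e k m * e i k * e m i with hT
  have h₁ : ⁅e i k * e k i, e k m * e m k⁆ = T := he.lie_pair_pair_of_adjacent hik' him' hkm'
  have h₂ : ⁅e i m * e m i, e k i * e i k⁆ = T := by
    rw [← lie_skew, he.lie_pair_pair_of_adjacent hik'.symm hkm' him', hT]
    noncomm_ring
  have h₃ : ⁅e i m * e m i, e k m * e m k⁆ = -T := by
    rw [he.lie_pair_pair_of_same_target hik' him' hkm', hT]
    noncomm_ring
  rw [smul_lie_smul, smul_lie_smul, smul_lie_smul, h₁, h₂, h₃,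
    ← neg_sub (z i) (z k), inv_neg]
  linear_combination (norm := module) inv_sub_mul_inv_sub hik him hkm • T

variable [Fintype ι]

noncomputable def gaudinHamiltonian (e : ι → ι → A) (z : ι → K) (i : ι) : A :=
  ∑ j ∈ univ.erase i, (z i - z j)⁻¹ • (e i j * e j i)

namespace IsGlFamily

theorem lie_gaudinHamiltonian_eq_zero (he : IsGlFamily e) {z : ι → K} (hz : Function.Injective z)
    (i k : ι) : ⁅gaudinHamiltonian e z i, gaudinHamiltonian e z k⁆ = 0 := by
  rcases eq_or_ne i k with rfl | hik
  · exact lie_self _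
  rw [gaudinHamiltonian, gaudinHamiltonian, sum_lie_sum]
  refine sum_erase_sum_erase_eq_zero hik _ ?_ ?_ ?_
  · exact (((he.commute_pair_swap i k).smul_left _).smul_right _).lie_eq
  · intro j l hji hjk hli hlk hjl
    have hcomm := he.commute_pair_of_disjoint hik (Ne.symm hli) hjk hjl
    exact ((hcomm.smul_left _).smul_right _).lie_eq
  · intro m hmi hmk
    exact he.lie_three_term_eq_zero (hz.ne hik) (hz.ne hmi.symm) (hz.ne hmk.symm)

theorem commute_gaudinHamiltonian (he : IsGlFamily e) {z : ι → K} (hz : Function.Injective z)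
    (i k : ι) : Commute (gaudinHamiltonian e z i) (gaudinHamiltonian e z k) :=
  commute_iff_lie_eq.mpr (he.lie_gaudinHamiltonian_eq_zero hz i k)

end IsGlFamily

end Gaudin

/-- for pairwise distinct `z_1, …, z_n` the quadratic Gaudin
Hamiltonians commute: `[H_i, H_k] = 0`. -/
theorem gaudin_hamiltonians_commute (n : ℕ) (z : Fin n → ℂ)
    (hz : Function.Injective z) (i k : Fin n) :
    gaudinH n z i * gaudinH n z k = gaudinH n z k * gaudinH n z i :=
  (isGlFamily_E n).commute_gaudinHamiltonian hz i k
end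

section
/- The derivatives of invariants commute in the shifted Poisson structure: let g be a finite-dimensional Lie algebra over ℂ, C ∈ g*, and let Φ, Ψ ∈ S(g) be elements of the Poisson center of S(g) (with the Lie–Poisson bracket). Then for all m, n ≥ 0 the elements ∂_C^m Φ and ∂_C^n Ψ Poisson-commute in S(g), where ∂_C denotes the constant-coefficient derivation of S(g) = ℂ[g*] in the direction C. -/
open scoped BigOperators

section
variable {ι : Type} [Fintype ι] [DecidableEq ι]
variable {L : Type} [LieRing L] [LieAlgebra ℂ L]

/-- A vector `v ∈ g`, viewed as a linear polynomial in `S(g) = ℂ[g*]`, written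
in the coordinates given by a basis `b` of `g`. -/
noncomputable def linPoly (b : Module.Basis ι ℂ L) (v : L) : MvPolynomial ι ℂ :=
  ∑ k, b.repr v k • MvPolynomial.X k

/-- The Lie–Poisson bracket on `S(g) = ℂ[g*]`, in the coordinates given by a basis
`b` of `g`: `{f, g} = Σ_{i,j} [b_i, b_j] · (∂f/∂x_i)(∂g/∂x_j)`. It is the unique
Poisson bracket with `{x, y} = [x, y]` for `x, y ∈ g`. -/
noncomputable def lpBracket (b : Module.Basis ι ℂ L) (f g : MvPolynomial ι ℂ) : MvPolynomial ι ℂ :=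
  ∑ i, ∑ j, linPoly b ⁅b i, b j⁆ * MvPolynomial.pderiv i f * MvPolynomial.pderiv j g

/-- The constant-coefficient derivation `∂_C` of `S(g) = ℂ[g*]` in the direction of
`C ∈ g*`: it sends `x ∈ g` to the constant `C(x)`. -/
noncomputable def dirDeriv (b : Module.Basis ι ℂ L) (C : Module.Dual ℂ L) (f : MvPolynomial ι ℂ) :
    MvPolynomial ι ℂ :=
  ∑ i, C (b i) • MvPolynomial.pderiv i f

/-!
Since `∂_C` has constant coefficients it commutes with every `∂/∂x_i`, so differentiating the
Lie–Poisson bracket only hits its linear coefficients `[x_i, x_j]`: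
`∂_C {f, g} = {∂_C f, g} + {f, ∂_C g} + {f, g}_C`, where `{x, y}_C = C([x, y])` is constant and
`∂_C` is a derivation of `{·, ·}_C`. Applying `∂_C` repeatedly to `{Φ, f} = 0` for central `Φ`
gives `{∂_C^(m+1) Φ, f} = -(m+1) {∂_C^m Φ, f}_C`. By induction on `m`, `{∂_C^(m+1) Φ, ∂_C^n Ψ}`
is then a multiple of `{∂_C^n Ψ, ∂_C^m Φ}_C`, itself a multiple of `{∂_C^(n+1) Ψ, ∂_C^m Φ} = 0`.
-/

namespace MvPolynomial

variable {R σ : Type*} [CommRing R]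

theorem pderiv_comm (i j : σ) (p : MvPolynomial σ R) :
    pderiv i (pderiv j p) = pderiv j (pderiv i p) := by
  classical
  have hcomm : ⁅pderiv i, pderiv j⁆ = (0 : Derivation R (MvPolynomial σ R) (MvPolynomial σ R)) :=
    derivation_ext fun k => by
      rw [Derivation.commutator_apply]
      simp [pderiv_X, Pi.single_apply, apply_ite]
  rw [← sub_eq_zero, ← Derivation.commutator_apply, hcomm, Derivation.zero_apply]

variable [Fintype σ]

noncomputable def coeffBracket (a : σ → σ → MvPolynomial σ R) (f g : MvPolynomial σ R) :
    MvPolynomial σ R :=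
  ∑ i, ∑ j, a i j * pderiv i f * pderiv j g

theorem coeffBracket_zero (f g : MvPolynomial σ R) : coeffBracket (fun _ _ => 0) f g = 0 := by
  simp [coeffBracket]

theorem coeffBracket_swap {a : σ → σ → MvPolynomial σ R} (ha : ∀ i j, a j i = -a i j)
    (f g : MvPolynomial σ R) : coeffBracket a g f = -coeffBracket a f g := by
  rw [coeffBracket, coeffBracket, Finset.sum_comm, ← Finset.sum_neg_distrib]
  refine Finset.sum_congr rfl fun i _ => ?_
  rw [← Finset.sum_neg_distrib]
  exact Finset.sum_congr rfl fun j _ => by rw [ha i j]; ring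

theorem _root_.Derivation.map_coeffBracket
    (D : Derivation R (MvPolynomial σ R) (MvPolynomial σ R))
    (hD : ∀ i p, D (pderiv i p) = pderiv i (D p)) (a : σ → σ → MvPolynomial σ R)
    (f g : MvPolynomial σ R) :
    D (coeffBracket a f g) = coeffBracket (fun i j => D (a i j)) f g
      + coeffBracket a (D f) g + coeffBracket a f (D g) := by
  simp only [coeffBracket, map_sum, Derivation.leibniz, hD, smul_eq_mul,
    ← Finset.sum_add_distrib]
  exact Finset.sum_congr rfl fun i _ => Finset.sum_congr rfl fun j _ => by ring

end MvPolynomial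

open MvPolynomial

set_option linter.unusedSectionVars false

/-- The constant Poisson bracket with `{x, y}_C = C([x, y])` for `x, y ∈ g`. -/
noncomputable def frozenBracket (b : Module.Basis ι ℂ L) (C : Module.Dual ℂ L) :
    MvPolynomial ι ℂ → MvPolynomial ι ℂ → MvPolynomial ι ℂ :=
  coeffBracket fun i j => MvPolynomial.C (C ⁅b i, b j⁆)

noncomputable def dirDerivation (b : Module.Basis ι ℂ L) (C : Module.Dual ℂ L) :
    Derivation ℂ (MvPolynomial ι ℂ) (MvPolynomial ι ℂ) :=
  ∑ i, C (b i) • pderiv i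

theorem coe_dirDerivation (b : Module.Basis ι ℂ L) (C : Module.Dual ℂ L) :
    ⇑(dirDerivation b C) = dirDeriv b C := by
  ext1 f
  change Derivation.coeFnAddMonoidHom _ f = _
  simp [dirDerivation, dirDeriv, Derivation.coeFnAddMonoidHom_apply]

section

variable (b : Module.Basis ι ℂ L) (C : Module.Dual ℂ L)

theorem dirDerivation_pderiv (i : ι) (p : MvPolynomial ι ℂ) :
    dirDerivation b C (pderiv i p) = pderiv i (dirDerivation b C p) := by
  simp only [coe_dirDerivation, dirDeriv, map_sum]
  exact Finset.sum_congr rfl fun j _ => by rw [Derivation.map_smul, pderiv_comm]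

theorem dirDerivation_linPoly (v : L) :
    dirDerivation b C (linPoly b v) = MvPolynomial.C (C v) := by
  have hv : C v = ∑ k, b.repr v k * C (b k) := by
    conv_lhs => rw [← b.sum_repr v]
    simp only [map_sum, map_smul, smul_eq_mul]
  simp [linPoly, coe_dirDerivation, dirDeriv, pderiv_X, Pi.single_apply, hv,
    MvPolynomial.smul_eq_C_mul]

theorem lpBracket_eq_coeffBracket :
    lpBracket b = coeffBracket fun i j => linPoly b ⁅b i, b j⁆ := rfl

theorem lpBracket_swap (f g : MvPolynomial ι ℂ) : lpBracket b g f = -lpBracket b f g := by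
  refine coeffBracket_swap (fun i j => ?_) f g
  rw [linPoly, linPoly, ← lie_skew (b i) (b j), map_neg]
  simp only [Finsupp.neg_apply, neg_smul, Finset.sum_neg_distrib, neg_neg]

theorem frozenBracket_swap (f g : MvPolynomial ι ℂ) :
    frozenBracket b C g f = -frozenBracket b C f g :=
  coeffBracket_swap (fun i j => by rw [← lie_skew, map_neg, map_neg]) f g

theorem dirDerivation_lpBracket (f g : MvPolynomial ι ℂ) :
    dirDerivation b C (lpBracket b f g) = frozenBracket b C f g
      + lpBracket b (dirDerivation b C f) g + lpBracket b f (dirDerivation b C g) := by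
  simp only [lpBracket_eq_coeffBracket, (dirDerivation b C).map_coeffBracket
    (dirDerivation_pderiv b C), dirDerivation_linPoly, frozenBracket]

theorem dirDerivation_frozenBracket (f g : MvPolynomial ι ℂ) :
    dirDerivation b C (frozenBracket b C f g) = frozenBracket b C (dirDerivation b C f) g
      + frozenBracket b C f (dirDerivation b C g) := by
  rw [frozenBracket, (dirDerivation b C).map_coeffBracket (dirDerivation_pderiv b C)]
  simp [← MvPolynomial.algebraMap_eq, coeffBracket_zero]

theorem lpBracket_iterate_succ_of_central {Φ : MvPolynomial ι ℂ} (hΦ : ∀ f, lpBracket b Φ f = 0)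
    (m : ℕ) (f : MvPolynomial ι ℂ) :
    lpBracket b ((dirDerivation b C)^[m + 1] Φ) f
      = -((m + 1) • frozenBracket b C ((dirDerivation b C)^[m] Φ) f) := by
  induction m generalizing f with
  | zero =>
    have h := congr(dirDerivation b C $(hΦ f))
    rw [dirDerivation_lpBracket, hΦ, map_zero] at h
    simp only [Function.iterate_one, Function.iterate_zero_apply, zero_add, one_smul]
    linear_combination h
  | succ m ih =>
    have h := congr(dirDerivation b C $(ih f))
    rw [dirDerivation_lpBracket, map_neg, map_nsmul, dirDerivation_frozenBracket] at h
    simp only [← Function.iterate_succ_apply' (dirDerivation b C), nsmul_eq_mul] at h ih ⊢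
    push_cast at h ih ⊢
    linear_combination h - ih (dirDerivation b C f)

end

/-- if `Φ` and `Ψ` are in the Poisson center of `S(g)` then all the
directional derivatives `∂_C^m Φ` and `∂_C^n Ψ` Poisson-commute. -/
theorem derivatives_of_invariants_poisson_commute (b : Module.Basis ι ℂ L)
    (C : Module.Dual ℂ L) (Φ Ψ : MvPolynomial ι ℂ)
    (hΦ : ∀ f, lpBracket b Φ f = 0) (hΨ : ∀ f, lpBracket b Ψ f = 0)
    (m n : ℕ) :
    lpBracket b ((dirDeriv b C)^[m] Φ) ((dirDeriv b C)^[n] Ψ) = 0 := by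
  rw [← coe_dirDerivation]
  set D := dirDerivation b C
  induction m generalizing n with
  | zero => exact hΦ _
  | succ m ih =>
    have hfrozen : frozenBracket b C (D^[n] Ψ) (D^[m] Φ) = 0 := by
      have h := lpBracket_iterate_succ_of_central b C hΨ n (D^[m] Φ)
      rw [lpBracket_swap, ih (n + 1), eq_comm, neg_inj] at h
      exact (smul_eq_zero.mp h).resolve_left n.succ_ne_zero
    rw [lpBracket_iterate_succ_of_central b C hΦ, frozenBracket_swap, hfrozen, neg_zero, smul_zero,
      neg_zero]

end
end

section
/- Magri–Lenard commutativity: let R be a commutative ℂ-algebra with two compatible Poisson brackets {·,·}_1 and {·,·}_2 (i.e., every linear combination is a Poisson bracket). If a lies in the Poisson center of R with respect to {·,·}_1 + t_1{·,·}_2 and b lies in the Poisson center with respect to {·,·}_1 + t_2{·,·}_2 for distinct t_1 ≠ t_2 ∈ ℂ, then {a,b}_1 = {a,b}_2 = 0. -/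
/-!
Evaluating the two centrality conditions at `b` and at `a` respectively, and using
antisymmetry to rewrite `{b,a}_i = -{a,b}_i`, the pair `({a,b}_1, {a,b}_2)` satisfies
`x + t₁ y = 0` and `x + t₂ y = 0`, a linear system of determinant `t₂ - t₁ ≠ 0`.
-/

/-- A bilinear map is a Poisson bracket on a commutative algebra `R` if it is a
Lie bracket (alternating and satisfying the Jacobi identity) and a biderivation
(Leibniz rule in each argument; one suffices by antisymmetry). -/
def IsPoissonBracket {R : Type*} [CommRing R] [Algebra ℂ R]
    (br : R →ₗ[ℂ] R →ₗ[ℂ] R) : Prop :=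
  (∀ x, br x x = 0) ∧
  (∀ x y z, br x (br y z) + br y (br z x) + br z (br x y) = 0) ∧
  (∀ x y z, br x (y * z) = y * br x z + br x y * z)

theorem IsPoissonBracket.isAlt {R : Type*} [CommRing R] [Algebra ℂ R]
    {br : R →ₗ[ℂ] R →ₗ[ℂ] R} (h : IsPoissonBracket br) : br.IsAlt :=
  h.1

theorem eq_zero_and_eq_zero_of_add_smul_eq_zero {K V : Type*} [DivisionRing K]
    [AddCommGroup V] [Module K V] {x y : V} {s t : K} (hst : s ≠ t)
    (hs : x + s • y = 0) (ht : x + t • y = 0) : x = 0 ∧ y = 0 := by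
  have hy : y = 0 := by
    have hdiff : (s - t) • y = 0 := by
      rw [sub_smul, ← add_sub_add_left_eq_sub _ _ x, hs, ht, sub_zero]
    exact (smul_eq_zero.mp hdiff).resolve_left (sub_ne_zero.mpr hst)
  exact ⟨by simpa [hy] using hs, hy⟩

theorem magri_lenard_general {R : Type*} [CommRing R] [Algebra ℂ R]
    (br₁ br₂ : R →ₗ[ℂ] R →ₗ[ℂ] R)
    (h₁ : IsPoissonBracket br₁) (h₂ : IsPoissonBracket br₂)
    (t₁ t₂ : ℂ) (hne : t₁ ≠ t₂) (a b : R)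
    (ha : ∀ r : R, br₁ a r + t₁ • br₂ a r = 0)
    (hb : ∀ r : R, br₁ b r + t₂ • br₂ b r = 0) :
    br₁ a b = 0 ∧ br₂ a b = 0 := by
  have hb' : br₁ a b + t₂ • br₂ a b = 0 := by
    have := hb a
    rw [← h₁.isAlt.neg, ← h₂.isAlt.neg] at this
    linear_combination (norm := module) -this
  exact eq_zero_and_eq_zero_of_add_smul_eq_zero hne (ha b) hb'

/-- Magri–Lenard commutativity: let `{·,·}_1, {·,·}_2` be two
compatible Poisson brackets on a commutative ℂ-algebra `R` (every linear
combination is again a Poisson bracket).  If `a` is in the Poisson center of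
`{·,·}_1 + t₁{·,·}_2` and `b` is in the Poisson center of `{·,·}_1 + t₂{·,·}_2`
with `t₁ ≠ t₂`, then `{a,b}_1 = {a,b}_2 = 0`. -/
theorem magri_lenard {R : Type*} [CommRing R] [Algebra ℂ R]
    (br₁ br₂ : R →ₗ[ℂ] R →ₗ[ℂ] R)
    (h₁ : IsPoissonBracket br₁) (h₂ : IsPoissonBracket br₂)
    (hcompat : ∀ s t : ℂ, IsPoissonBracket (s • br₁ + t • br₂))
    (t₁ t₂ : ℂ) (hne : t₁ ≠ t₂) (a b : R)
    (ha : ∀ r : R, br₁ a r + t₁ • br₂ a r = 0)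
    (hb : ∀ r : R, br₁ b r + t₂ • br₂ b r = 0) :
    br₁ a b = 0 ∧ br₂ a b = 0 :=
  magri_lenard_general br₁ br₂ h₁ h₂ t₁ t₂ hne a b ha hb
end

section
/- In the Yangian Y(gl_n), the quantum minors are skew-symmetric in their upper indices: t^{a_{σ(1)}...a_{σ(k)}}_{b_1...b_k}(u) = sgn(σ)·t^{a_1...a_k}_{b_1...b_k}(u) for any permutation σ ∈ S_k, where t^{a_1...a_k}_{b_1...b_k}(u) = Σ_{σ∈S_k} (-1)^σ t_{a_{σ(1)}b_1}(u)·t_{a_{σ(2)}b_2}(u-1)···t_{a_{σ(k)}b_k}(u-k+1). -/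
open scoped BigOperators

abbrev YFA (n : ℕ) := FreeAlgebra ℂ (Fin n × Fin n × ℕ)

noncomputable def tFree (n : ℕ) (i j : Fin n) (r : ℕ) : YFA n :=
  if r = 0 then (if i = j then 1 else 0) else FreeAlgebra.ι ℂ (i, j, r)

inductive YangianRel (n : ℕ) : YFA n → YFA n → Prop
  | rel (i j k l : Fin n) (r s : ℕ) :
      YangianRel n
        (⁅tFree n i j (r+1), tFree n k l s⁆ - ⁅tFree n i j r, tFree n k l (s+1)⁆)
        (tFree n k j r * tFree n i l s - tFree n k j s * tFree n i l r)

abbrev Yangian (n : ℕ) := RingQuot (YangianRel n)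

noncomputable def t (n : ℕ) (i j : Fin n) (r : ℕ) : Yangian n :=
  RingQuot.mkAlgHom ℂ (YangianRel n) (tFree n i j r)

noncomputable def shiftVar (n : ℕ) (c : ℕ) : PowerSeries (Yangian n) :=
  PowerSeries.X * PowerSeries.invOfUnit (1 - (c : Yangian n) • PowerSeries.X) 1

noncomputable def tSeries (n : ℕ) (i j : Fin n) (c : ℕ) : PowerSeries (Yangian n) :=
  PowerSeries.mk fun N =>
    ∑ r ∈ Finset.range (N + 1), t n i j r * PowerSeries.coeff N ((shiftVar n c) ^ r)

noncomputable def qminor (n k : ℕ) (a b : Fin k → Fin n) : PowerSeries (Yangian n) :=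
  ∑ σ : Equiv.Perm (Fin k),
    ((Equiv.Perm.sign σ : ℤ) : ℤ) •
      (List.ofFn fun p : Fin k => tSeries n (a (σ p)) (b p) (p : ℕ)).prod

/-! No relation of the Yangian is involved: a quantum minor is an alternating sum over `S_k`,
and reindexing it by `τ ↦ σ τ` pulls out `sgn σ`. -/

open Equiv

noncomputable def altSum {ι α M : Type*} [Fintype ι] [DecidableEq ι] [AddCommGroup M]
    (g : (ι → α) → M) (a : ι → α) : M :=
  ∑ τ : Perm ι, (Perm.sign τ : ℤ) • g (a ∘ τ)

theorem altSum_comp_perm {ι α M : Type*} [Fintype ι] [DecidableEq ι] [AddCommGroup M]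
    (g : (ι → α) → M) (a : ι → α) (σ : Perm ι) :
    altSum g (a ∘ σ) = (Perm.sign σ : ℤ) • altSum g a := by
  rw [altSum, altSum, Finset.smul_sum]
  refine Fintype.sum_equiv (Equiv.mulLeft σ) _ _ fun τ => ?_
  rw [smul_smul, coe_mulLeft, Perm.sign_mul, Units.val_mul, ← mul_assoc, ← Units.val_mul,
    Int.units_mul_self, Units.val_one, one_mul]
  rfl

theorem qminor_eq_altSum (n k : ℕ) (a b : Fin k → Fin n) :
    qminor n k a b =
      altSum (fun c : Fin k → Fin n => (List.ofFn fun p => tSeries n (c p) (b p) p).prod) a :=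
  rfl

/-- quantum minors are skew-symmetric in their upper indices:
`t^{a_{σ(1)}…a_{σ(k)}}_{b_1…b_k}(u) = sgn(σ)·t^{a_1…a_k}_{b_1…b_k}(u)`. -/
theorem qminor_skew_symmetric_upper (n k : ℕ) (a b : Fin k → Fin n)
    (σ : Equiv.Perm (Fin k)) :
    qminor n k (a ∘ σ) b = ((Equiv.Perm.sign σ : ℤ) : ℤ) • qminor n k a b := by
  rw [qminor_eq_altSum, qminor_eq_altSum, altSum_comp_perm]
end

section
/- The associated graded of the Yangian filtration is commutative: with the filtration on Y(gl_n) given by deg t_{ij}^{(r)} = r, for any x of filtration degree ≤ p and y of filtration degree ≤ q, the commutator [x,y] has filtration degree ≤ p + q - 1. Consequently the associated graded algebra gr Y(gl_n) is commutative and inherits a Poisson bracket. -/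
open scoped BigOperators

/-- The `r`-th filtered piece `Y_r(gl_n)` of the Yangian: the span of products of
generators `t_{ij}^{(s)}` of total degree (sum of the `s`'s) at most `r`. -/
noncomputable def YFil (n r : ℕ) : Submodule ℂ (Yangian n) :=
  Submodule.span ℂ {x | ∃ L : List (Fin n × Fin n × ℕ),
    (L.map fun p => p.2.2).sum ≤ r ∧ x = (L.map fun p => t n p.1 p.2.1 p.2.2).prod}

/-!
The filtration is spanned by words in the generators, so the bracket with a fixed element is a
derivation of the associative product and it suffices to bound brackets of generators. For those,
the defining relation trades `[t^{(r+1)}, t^{(s)}]` for `[t^{(r)}, t^{(s+1)}]` plus quadratic terms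
of degree `r + s`, and induction on `r` ends at `t^{(0)}_{ij} = δ_{ij}`, which is central.
-/

section FiltrationLT

variable {R A : Type*} [Semiring R] [Semiring A] [Module R A]

/-- The piece `F_{k-1}` of an `ℕ`-indexed filtration, with the convention `F_{-1} = 0`
(Mathlib's `F_lt` of `IsFiltration`). -/
def filtrationLT (F : ℕ → Submodule R A) : ℕ → Submodule R A
  | 0 => ⊥
  | k + 1 => F k

variable {F : ℕ → Submodule R A}

@[simp]
theorem filtrationLT_zero : filtrationLT F 0 = ⊥ :=
  rfl

@[simp]
theorem filtrationLT_succ (k : ℕ) : filtrationLT F (k + 1) = F k :=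
  rfl

theorem filtrationLT_mono (hF : Monotone F) : Monotone (filtrationLT F) := by
  intro i j hij
  match i, j with
  | 0, _ => exact bot_le
  | i + 1, j + 1 => exact hF (Nat.le_of_succ_le_succ hij)

theorem filtrationLT_le_pred (k : ℕ) : filtrationLT F k ≤ F (k - 1) := by
  cases k with
  | zero => exact bot_le
  | succ k => exact le_rfl

variable [SetLike.GradedMonoid F]

theorem mul_mem_filtrationLT_left {p q : ℕ} {x y : A} (hx : x ∈ filtrationLT F p)
    (hy : y ∈ F q) : x * y ∈ filtrationLT F (p + q) := by
  cases p with
  | zero => simp_all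
  | succ p =>
    rw [Nat.add_right_comm, filtrationLT_succ]
    exact SetLike.mul_mem_graded hx hy

theorem mul_mem_filtrationLT_right {p q : ℕ} {x y : A} (hx : x ∈ F p)
    (hy : y ∈ filtrationLT F q) : x * y ∈ filtrationLT F (p + q) := by
  cases q with
  | zero => simp_all
  | succ q =>
    rw [← add_assoc, filtrationLT_succ]
    exact SetLike.mul_mem_graded hx hy

end FiltrationLT

theorem Ring.lie_mul_right {A : Type*} [Ring A] (x a b : A) :
    ⁅x, a * b⁆ = ⁅x, a⁆ * b + a * ⁅x, b⁆ := by
  simp only [Ring.lie_def, sub_mul, mul_sub, mul_assoc]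
  abel

section WordFiltration

variable (R : Type*) {A ι : Type*} [CommSemiring R] [Semiring A] [Algebra R A]

def wordFiltration (w : ι → A) (d : ι → ℕ) (r : ℕ) : Submodule R A :=
  Submodule.span R {x | ∃ L : List ι, (L.map d).sum ≤ r ∧ x = (L.map w).prod}

variable {R} {w : ι → A} {d : ι → ℕ}

theorem wordFiltration_mono : Monotone (wordFiltration R w d) := by
  intro p q hpq
  apply Submodule.span_mono
  rintro x ⟨L, hL, rfl⟩
  exact ⟨L, hL.trans hpq, rfl⟩

theorem list_prod_mem_wordFiltration (L : List ι) :
    (L.map w).prod ∈ wordFiltration R w d (L.map d).sum :=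
  Submodule.subset_span ⟨L, le_rfl, rfl⟩

theorem mem_wordFiltration_weight (a : ι) : w a ∈ wordFiltration R w d (d a) := by
  simpa using list_prod_mem_wordFiltration (R := R) (w := w) (d := d) [a]

theorem wordFiltration_mul_le (p q : ℕ) :
    wordFiltration R w d p * wordFiltration R w d q ≤ wordFiltration R w d (p + q) := by
  rw [wordFiltration, wordFiltration, Submodule.span_mul_span]
  apply Submodule.span_mono
  rintro _ ⟨_, ⟨L, hL, rfl⟩, _, ⟨M, hM, rfl⟩, rfl⟩
  refine ⟨L ++ M, ?_, ?_⟩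
  · rw [List.map_append, List.sum_append]; omega
  · rw [List.map_append, List.prod_append]

instance : SetLike.GradedMonoid (wordFiltration R w d) where
  one_mem := by simpa using list_prod_mem_wordFiltration (R := R) (w := w) (d := d) []
  mul_mem _ _ _ _ hx hy := wordFiltration_mul_le _ _ (Submodule.mul_mem_mul hx hy)

end WordFiltration

section WordFiltrationLie

variable {R A ι : Type*} [CommRing R] [Ring A] [Algebra R A] {w : ι → A} {d : ι → ℕ}

attribute [local instance] LieRing.ofAssociativeRing

theorem lie_mem_filtrationLT_of_lie_generator_mem {x : A} {p : ℕ}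
    (hx : ∀ b, ⁅x, w b⁆ ∈ filtrationLT (wordFiltration R w d) (p + d b)) {q : ℕ} {y : A}
    (hy : y ∈ wordFiltration R w d q) :
    ⁅x, y⁆ ∈ filtrationLT (wordFiltration R w d) (p + q) := by
  have words : ∀ M : List ι,
      ⁅x, (M.map w).prod⁆ ∈ filtrationLT (wordFiltration R w d) (p + (M.map d).sum) := by
    intro M
    induction M with
    | nil =>
      simp only [List.map_nil, List.prod_nil]
      rw [(Commute.one_right x).lie_eq]
      exact zero_mem _
    | cons b M ih =>
      simp only [List.map_cons, List.prod_cons, List.sum_cons]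
      rw [Ring.lie_mul_right]
      refine add_mem ?_ ?_
      · rw [← add_assoc]
        exact mul_mem_filtrationLT_left (hx b) (list_prod_mem_wordFiltration M)
      · rw [Nat.add_left_comm]
        exact mul_mem_filtrationLT_right (mem_wordFiltration_weight b) ih
  have hle : wordFiltration R w d q ≤
      (filtrationLT (wordFiltration R w d) (p + q)).comap (LieAlgebra.ad R A x) := by
    refine Submodule.span_le.mpr ?_
    rintro _ ⟨M, hM, rfl⟩
    exact filtrationLT_mono wordFiltration_mono (by omega) (words M)
  exact hle hy

theorem lie_mem_filtrationLT_of_generators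
    (h : ∀ a b, ⁅w a, w b⁆ ∈ filtrationLT (wordFiltration R w d) (d a + d b)) {p q : ℕ} {x y : A}
    (hx : x ∈ wordFiltration R w d p) (hy : y ∈ wordFiltration R w d q) :
    ⁅x, y⁆ ∈ filtrationLT (wordFiltration R w d) (p + q) := by
  have generator_lie (a : ι) : ⁅y, w a⁆ ∈ filtrationLT (wordFiltration R w d) (q + d a) := by
    rw [← lie_skew, add_comm]
    exact neg_mem (lie_mem_filtrationLT_of_lie_generator_mem (h a) hy)
  rw [← lie_skew, add_comm]
  exact neg_mem (lie_mem_filtrationLT_of_lie_generator_mem generator_lie hx)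

end WordFiltrationLie

theorem YFil_eq_wordFiltration (n : ℕ) :
    YFil n = wordFiltration ℂ (fun p : Fin n × Fin n × ℕ => t n p.1 p.2.1 p.2.2) (·.2.2) :=
  rfl

instance (n : ℕ) : SetLike.GradedMonoid (YFil n) :=
  inferInstanceAs <| SetLike.GradedMonoid (wordFiltration ℂ _ _)

theorem t_zero (n : ℕ) (i j : Fin n) : t n i j 0 = if i = j then 1 else 0 := by
  unfold t tFree
  by_cases h : i = j <;> simp [h]

theorem t_succ_lie_t (n : ℕ) (i j k l : Fin n) (r s : ℕ) :
    ⁅t n i j (r + 1), t n k l s⁆ =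
      ⁅t n i j r, t n k l (s + 1)⁆ + (t n k j r * t n i l s - t n k j s * t n i l r) := by
  have h := RingQuot.mkAlgHom_rel ℂ (YangianRel.rel (n := n) i j k l r s)
  simp only [Ring.lie_def, map_sub, map_mul] at h ⊢
  unfold t
  rw [sub_eq_iff_eq_add] at h
  rw [h]
  abel

theorem t_mem_YFil (n : ℕ) (i j : Fin n) (r : ℕ) : t n i j r ∈ YFil n r :=
  mem_wordFiltration_weight (i, j, r)

theorem t_lie_t_mem_filtrationLT (n : ℕ) (i j k l : Fin n) (r s : ℕ) :
    ⁅t n i j r, t n k l s⁆ ∈ filtrationLT (YFil n) (r + s) := by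
  induction r generalizing s with
  | zero => rw [t_zero]; split_ifs <;> simp [Ring.lie_def]
  | succ r ih =>
    rw [t_succ_lie_t, Nat.add_right_comm]
    refine add_mem (ih (s + 1)) ?_
    rw [filtrationLT_succ]
    refine sub_mem (SetLike.mul_mem_graded (t_mem_YFil n k j r) (t_mem_YFil n i l s)) ?_
    rw [add_comm r]
    exact SetLike.mul_mem_graded (t_mem_YFil n k j s) (t_mem_YFil n i l r)

/-- the associated graded of the Yangian filtration is commutative:
if `x` has filtration degree `≤ p` and `y` has filtration degree `≤ q`, then
`[x, y]` has filtration degree `≤ p + q - 1`. -/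
theorem yangian_commutator_filtration (n p q : ℕ) (x y : Yangian n)
    (hx : x ∈ YFil n p) (hy : y ∈ YFil n q) :
    ⁅x, y⁆ ∈ YFil n (p + q - 1) := by
  refine filtrationLT_le_pred _ (lie_mem_filtrationLT_of_generators ?_ hx hy)
  rintro ⟨i, j, r⟩ ⟨k, l, s⟩
  exact t_lie_t_mem_filtrationLT n i j k l r s
end
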